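/- arXiv:1811.02513 — 3 statements merged into one kernel-verified Lean document; each statement's English description precedes it below -/
import Mathlib

section
/- If the radial displacement r follows a Rayleigh distribution with scale parameter σ_s (PDF f_r(r) = (r/σ_s²)exp(-r²/(2σ_s²)) for r > 0), and h_p = A_0·exp(-2r²/w_eq²) with A_0 > 0 and w_eq > 0, then the probability density function of h_p is f(x) = (ξ/A_0^ξ)·x^(ξ-1) for 0 ≤ x ≤ A_0, where ξ = w_eq²/(4σ_s²). -/
/-!
The event `h_p ≤ x` is the event `r ≥ a` with `a² = (w²/2) log(A₀/x)`. The Rayleigh density is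
the derivative of `-exp(-r²/(2σ²))`, so this event has probability `exp(-a²/(2σ²)) = (x/A₀)^ξ`,
which is also the integral of `(ξ/A₀^ξ) t^(ξ-1)` over `[0, x]`.
-/

open MeasureTheory Real Set

lemma exp_neg_two_mul_sq_div_le_iff {A w x r : ℝ} (hA : 0 < A) (hx : 0 < x) (hw : w ≠ 0) :
    A * exp (-2 * r ^ 2 / w ^ 2) ≤ x ↔ w ^ 2 / 2 * log (A / x) ≤ r ^ 2 := by
  have hw2 : 0 < w ^ 2 := by positivity
  rw [← le_div_iff₀' hA, ← le_log_iff_exp_le (by positivity), ← inv_div A x, log_inv,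
    div_le_iff₀ hw2]
  constructor <;> intro h <;> nlinarith

lemma pointing_level_set_eq {A w x : ℝ} (hA : 0 < A) (hx : 0 < x) (hw : w ≠ 0) :
    {r : ℝ | 0 < r ∧ A * exp (-2 * r ^ 2 / w ^ 2) ≤ x}
      = Ioi 0 ∩ Ici (√(w ^ 2 / 2 * log (A / x))) := by
  ext r
  simp only [mem_ofPred_eq, mem_inter_iff, mem_Ioi, mem_Ici,
    exp_neg_two_mul_sq_div_le_iff hA hx hw]
  constructor
  · rintro ⟨hr, h⟩
    exact ⟨hr, sqrt_le_iff.mpr ⟨hr.le, h⟩⟩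
  · rintro ⟨hr, h⟩
    exact ⟨hr, (sqrt_le_iff.mp h).2⟩

lemma Ioi_zero_inter_Ici_ae_eq_Ioi {a : ℝ} (ha : 0 ≤ a) :
    (Ioi 0 ∩ Ici a : Set ℝ) =ᵐ[volume] Ioi a := by
  have : (Ioi 0 ∩ Ioi a : Set ℝ) = Ioi a := by
    rw [Ioi_inter_Ioi, max_eq_right ha]
  rw [← this]
  exact (ae_eq_refl _).inter Ioi_ae_eq_Ici.symm

lemma hasDerivAt_neg_exp_neg_sq_div {σ : ℝ} (hσ : σ ≠ 0) (r : ℝ) :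
    HasDerivAt (fun r => -exp (-r ^ 2 / (2 * σ ^ 2)))
      (r / σ ^ 2 * exp (-r ^ 2 / (2 * σ ^ 2))) r := by
  have hsq : HasDerivAt (fun r : ℝ => -r ^ 2 / (2 * σ ^ 2)) (-(2 * r) / (2 * σ ^ 2)) r := by
    simpa using ((hasDerivAt_pow 2 r).neg.div_const (2 * σ ^ 2))
  refine hsq.exp.neg.congr_deriv ?_
  field_simp

lemma integral_Ioi_rayleigh_density {σ a : ℝ} (hσ : σ ≠ 0) (ha : 0 ≤ a) :
    ∫ r in Ioi a, r / σ ^ 2 * exp (-r ^ 2 / (2 * σ ^ 2)) = exp (-a ^ 2 / (2 * σ ^ 2)) := by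
  have hnonneg : ∀ r ∈ Ioi a, 0 ≤ r / σ ^ 2 * exp (-r ^ 2 / (2 * σ ^ 2)) := fun r hr => by
    have : 0 < r := ha.trans_lt hr
    positivity
  have hlim : Filter.Tendsto (fun r : ℝ => -exp (-r ^ 2 / (2 * σ ^ 2))) Filter.atTop
      (nhds 0) := by
    have h : Filter.Tendsto (fun r : ℝ => -r ^ 2 / (2 * σ ^ 2)) Filter.atTop Filter.atBot :=
      (Filter.tendsto_neg_atBot_iff.mpr (Filter.tendsto_pow_atTop two_ne_zero)).atBot_div_const
        (by positivity)
    simpa using (tendsto_exp_atBot.comp h).neg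
  rw [integral_Ioi_of_hasDerivAt_of_nonneg'
    (fun r _ => hasDerivAt_neg_exp_neg_sq_div hσ r) hnonneg hlim]
  ring

lemma integral_power_density {A ξ x : ℝ} (hξ : 0 < ξ) :
    ∫ t in (0 : ℝ)..x, ξ / A ^ ξ * t ^ (ξ - 1) = x ^ ξ / A ^ ξ := by
  rw [intervalIntegral.integral_const_mul, integral_rpow (Or.inl (by linarith)),
    sub_add_cancel, zero_rpow hξ.ne', sub_zero]
  field_simp

theorem stmt_0_general (σ w A₀ ξ : ℝ) (hσ : 0 < σ) (hw : 0 < w)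
    (hA₀ : 0 < A₀) (hξ : ξ = w ^ 2 / (4 * σ ^ 2)) :
    ∀ x : ℝ, 0 < x → x ≤ A₀ →
      (∫ r in {r : ℝ | 0 < r ∧ A₀ * Real.exp (-2 * r ^ 2 / w ^ 2) ≤ x},
          r / σ ^ 2 * Real.exp (-r ^ 2 / (2 * σ ^ 2)))
        = ∫ t in (0 : ℝ)..x, ξ / A₀ ^ ξ * t ^ (ξ - 1) := by
  intro x hx hxA
  have hlog : 0 ≤ log (A₀ / x) := log_nonneg ((one_le_div hx).mpr hxA)
  have ha2 : √(w ^ 2 / 2 * log (A₀ / x)) ^ 2 = w ^ 2 / 2 * log (A₀ / x) :=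
    sq_sqrt (by positivity)
  rw [pointing_level_set_eq hA₀ hx hw.ne', setIntegral_congr_set
      (Ioi_zero_inter_Ici_ae_eq_Ioi (sqrt_nonneg _)),
    integral_Ioi_rayleigh_density hσ.ne' (sqrt_nonneg _), ha2,
    integral_power_density (by rw [hξ]; positivity), ← div_rpow hx.le hA₀.le,
    rpow_def_of_pos (by positivity), ← inv_div A₀ x, log_inv, hξ]
  congr 1
  field_simp
  ring

/-- If the radial displacement `r` is Rayleigh distributed with scale `σ` and
`h_p = A₀ exp(-2r²/w_eq²)`, then the PDF of `h_p` is `(ξ/A₀^ξ) x^(ξ-1)` on `[0, A₀]`,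
expressed via the equality of the CDF of `h_p` with the integral of the claimed density. -/
theorem stmt_0 (σ w A₀ ξ : ℝ) (hσ : 0 < σ) (hw : 0 < w)
    (hA₀ : 0 < A₀) (hA₀1 : A₀ ≤ 1) (hξ : ξ = w ^ 2 / (4 * σ ^ 2)) :
    ∀ x : ℝ, 0 < x → x ≤ A₀ →
      (∫ r in {r : ℝ | 0 < r ∧ A₀ * Real.exp (-2 * r ^ 2 / w ^ 2) ≤ x},
          r / σ ^ 2 * Real.exp (-r ^ 2 / (2 * σ ^ 2)))
        = ∫ t in (0 : ℝ)..x, ξ / A₀ ^ ξ * t ^ (ξ - 1) :=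
  stmt_0_general σ w A₀ ξ hσ hw hA₀ hξ
end

section
/- Let ξ > 0, B > 0, A_0 > 0 with B·A_0² < 1. If h_p has density (ξ/A_0^ξ)x^(ξ−1) on [0, A_0], then E[log₂(1 + B·h_p²)] = log₂(1 + B·A_0²) − (A_0²·B/ln 2)·Φ(−A_0²·B, 1, 1 + ξ/2), where Φ is the Lerch transcendent. -/
/-!
Since `B x² ≤ B A₀² < 1` on `[0, A₀]`, the series
`log (1 + B x²) = Σ (-1)ⁿ (B x²)ⁿ⁺¹ / (n + 1)` can be integrated term by term against the
density `ξ / A₀^ξ · x^(ξ-1)`, giving `Σ (-1)ⁿ wⁿ⁺¹ ξ / ((n + 1)(2(n + 1) + ξ))` with `w = B A₀²`.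
The partial fraction decomposition `ξ / ((n + 1)(2(n + 1) + ξ)) = 1 / (n + 1) - 1 / (1 + ξ/2 + n)`
splits this series into the logarithmic series of `log (1 + w)` and `w · Φ(-w, 1, 1 + ξ/2)`.
-/

open MeasureTheory Real
open intervalIntegral

/-- The Lerch transcendent with `s = 1`: `Φ(z, 1, v) = Σ_{k≥0} z^k/(v+k)`. -/
noncomputable def lerchPhi (z v : ℝ) : ℝ := ∑' k : ℕ, z ^ k / (v + k)

theorem Real.hasSum_log_one_add_of_abs_lt_one {w : ℝ} (hw : |w| < 1) :
    HasSum (fun n : ℕ => (-1) ^ n * w ^ (n + 1) / (n + 1)) (log (1 + w)) := by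
  have h := (hasSum_pow_div_log_of_abs_lt_one (x := -w) (by rwa [abs_neg])).neg
  rw [sub_neg_eq_add, neg_neg] at h
  refine h.congr_fun fun n => ?_
  rw [neg_pow]
  ring

theorem hasSum_lerchPhi {z v : ℝ} (hz : |z| < 1) (hv : 0 < v) :
    HasSum (fun k : ℕ => z ^ k / (v + k)) (lerchPhi z v) := by
  refine Summable.hasSum <| Summable.of_norm_bounded
    ((summable_geometric_of_lt_one (abs_nonneg z) hz).div_const v) fun k => ?_
  rw [norm_div, norm_pow, Real.norm_eq_abs, Real.norm_of_nonneg (by positivity)]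
  gcongr
  linarith [k.cast_nonneg (α := ℝ)]

theorem hasSum_intervalIntegral_tsum_rpow {A : ℝ} (hA : 0 ≤ A) {c e : ℕ → ℝ}
    (he : ∀ n, -1 < e n) (hsum : Summable fun n => |c n| * (A ^ (e n + 1) / (e n + 1))) :
    HasSum (fun n => c n * (A ^ (e n + 1) / (e n + 1)))
      (∫ x in (0 : ℝ)..A, ∑' n, c n * x ^ e n) := by
  have hmoment (n : ℕ) : ∫ x in Set.Ioc 0 A, x ^ e n = A ^ (e n + 1) / (e n + 1) := by
    rw [← integral_of_le hA, integral_rpow (Or.inl (he n)),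
      zero_rpow (by linarith [he n]), sub_zero]
  have hint (n : ℕ) : Integrable (fun x => c n * x ^ e n) (volume.restrict (Set.Ioc 0 A)) :=
    ((intervalIntegrable_iff_integrableOn_Ioc_of_le hA).mp
      (intervalIntegrable_rpow' (he n))).const_mul _
  have hnorm (n : ℕ) :
      ∫ x in Set.Ioc 0 A, ‖c n * x ^ e n‖ = |c n| * (A ^ (e n + 1) / (e n + 1)) := by
    rw [setIntegral_congr_fun measurableSet_Ioc (g := fun x => |c n| * x ^ e n) fun x hx => by
      rw [Real.norm_eq_abs, abs_mul, abs_of_nonneg (rpow_nonneg hx.1.le _)],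
      MeasureTheory.integral_const_mul, hmoment]
  rw [integral_of_le hA]
  refine (hasSum_integral_of_summable_integral_norm hint
    (by simpa only [hnorm] using hsum)).congr_fun fun n => ?_
  rw [MeasureTheory.integral_const_mul, hmoment]

noncomputable def logMomentTerm (w ξ : ℝ) (n : ℕ) : ℝ :=
  (-1) ^ n * w ^ (n + 1) * (ξ / ((n + 1) * (2 * (n + 1) + ξ)))

theorem summable_logMomentTerm {w ξ : ℝ} (hw : |w| < 1) (hξ : 0 < ξ) :
    Summable (logMomentTerm w ξ) := by
  refine Summable.of_norm_bounded
    ((summable_geometric_of_lt_one (abs_nonneg w) hw).mul_left |w|) fun n => ?_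
  have hq0 : 0 ≤ ξ / ((n + 1) * (2 * (n + 1) + ξ)) := by positivity
  have hq : ξ / ((n + 1) * (2 * (n + 1) + ξ)) ≤ 1 := by
    rw [div_le_one (by positivity)]
    nlinarith [n.cast_nonneg (α := ℝ)]
  simp only [logMomentTerm, norm_mul, norm_pow, norm_neg, norm_one, one_pow, one_mul,
    Real.norm_eq_abs]
  rw [abs_of_nonneg hq0, ← pow_succ']
  exact mul_le_of_le_one_right (by positivity) hq

theorem hasSum_log_one_add_sub_mul_lerchPhi {w ξ : ℝ} (hw : |w| < 1) (hξ : -2 < ξ) :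
    HasSum (logMomentTerm w ξ) (log (1 + w) - w * lerchPhi (-w) (1 + ξ / 2)) := by
  have hphi := hasSum_lerchPhi (by rwa [abs_neg]) (by linarith : (0 : ℝ) < 1 + ξ / 2)
  refine ((hasSum_log_one_add_of_abs_lt_one hw).sub (hphi.mul_left w)).congr_fun fun n => ?_
  have h1 : (n : ℝ) + 1 ≠ 0 := by positivity
  have h2 : 1 + ξ / 2 + (n : ℝ) ≠ 0 := by linarith [n.cast_nonneg (α := ℝ)]
  have h3 : 2 * ((n : ℝ) + 1) + ξ ≠ 0 := by linarith [n.cast_nonneg (α := ℝ)]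
  have hcoeff :
      1 / ((n : ℝ) + 1) - 1 / (1 + ξ / 2 + n) = ξ / ((n + 1) * (2 * (n + 1) + ξ)) := by
    rw [div_sub_div _ _ h1 h2, div_eq_div_iff (mul_ne_zero h1 h2) (mul_ne_zero h1 h3)]
    ring
  rw [logMomentTerm, ← hcoeff, neg_pow]
  ring

theorem hasSum_integral_log_one_add_mul_sq_mul_rpow {ξ B A : ℝ} (hξ : 0 < ξ) (hA : 0 < A)
    (hBA : |B| * A ^ 2 < 1) :
    HasSum (logMomentTerm (B * A ^ 2) ξ)
      (∫ x in (0 : ℝ)..A, log (1 + B * x ^ 2) * (ξ / A ^ ξ * x ^ (ξ - 1))) := by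
  set c : ℕ → ℝ := fun n => (-1) ^ n * B ^ (n + 1) / (n + 1) * (ξ / A ^ ξ)
  set e : ℕ → ℝ := fun n => ξ - 1 + ((2 * (n + 1) : ℕ) : ℝ)
  have he (n : ℕ) : e n + 1 = ξ + ((2 * (n + 1) : ℕ) : ℝ) := by ring
  have he_pos (n : ℕ) : 0 < e n := by
    simp only [e]
    push_cast
    linarith [n.cast_nonneg (α := ℝ)]
  have hterm (n : ℕ) : c n * (A ^ (e n + 1) / (e n + 1)) = logMomentTerm (B * A ^ 2) ξ n := by
    rw [he, rpow_add_natCast' hA.le (by rw [← he]; linarith [he_pos n]), pow_mul]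
    have : A ^ ξ ≠ 0 := (rpow_pos_of_pos hA ξ).ne'
    simp only [c, logMomentTerm]
    push_cast
    field_simp
    ring
  have hexpand : Set.EqOn (fun x => log (1 + B * x ^ 2) * (ξ / A ^ ξ * x ^ (ξ - 1)))
      (fun x => ∑' n, c n * x ^ e n) (Set.uIcc 0 A) := by
    intro x hx
    rw [Set.uIcc_of_le hA.le] at hx
    have hBx : |B * x ^ 2| < 1 := by
      rw [abs_mul, abs_of_nonneg (sq_nonneg x)]
      exact (mul_le_mul_of_nonneg_left (pow_le_pow_left₀ hx.1 hx.2 2) (abs_nonneg B)).trans_lt hBA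
    refine (((hasSum_log_one_add_of_abs_lt_one hBx).mul_right _).tsum_eq.symm.trans
      (tsum_congr fun n => ?_))
    rw [rpow_add_natCast' hx.1 (he_pos n).ne']
    ring
  have hw : |B * A ^ 2| < 1 := by rwa [abs_mul, abs_of_nonneg (sq_nonneg A)]
  rw [integral_congr hexpand]
  refine (hasSum_intervalIntegral_tsum_rpow hA.le (fun n => by linarith [he_pos n]) ?_).congr_fun
    fun n => (hterm n).symm
  refine (summable_logMomentTerm hw hξ).abs.congr fun n => ?_
  rw [← hterm, abs_mul, abs_of_nonneg (div_nonneg (rpow_nonneg hA.le _) (by linarith [he_pos n]))]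

/-- If `h_p` has density `(ξ/A₀^ξ) x^(ξ-1)` on `[0, A₀]` and `B A₀² < 1`, then
`E[log₂(1+B h_p²)] = log₂(1+B A₀²) − (A₀²B/ln 2) Φ(−A₀²B, 1, 1+ξ/2)`. -/
theorem stmt_7 (ξ B A₀ : ℝ) (hξ : 0 < ξ) (hB : 0 < B) (hA₀ : 0 < A₀)
    (hBA : B * A₀ ^ 2 < 1) :
    (∫ x in (0 : ℝ)..A₀, Real.logb 2 (1 + B * x ^ 2) * (ξ / A₀ ^ ξ * x ^ (ξ - 1)))
      = Real.logb 2 (1 + B * A₀ ^ 2)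
        - (A₀ ^ 2 * B / Real.log 2) * lerchPhi (-(A₀ ^ 2 * B)) (1 + ξ / 2) := by
  have hw : |B * A₀ ^ 2| < 1 := by rwa [abs_of_pos (by positivity)]
  have hBA_abs : |B| * A₀ ^ 2 < 1 := by rwa [abs_of_pos hB]
  have hlog := (hasSum_integral_log_one_add_mul_sq_mul_rpow hξ hA₀ hBA_abs).unique
    (hasSum_log_one_add_sub_mul_lerchPhi hw (by linarith))
  simp only [logb, div_mul_eq_mul_div _ (log 2), intervalIntegral.integral_div, hlog,
    mul_comm (A₀ ^ 2) B]
  ring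
end

section
/- The ergodic spectral efficiency C = (1/2)log₂(1 + B·A_0²) − (A_0²B/(2 ln 2))·Φ(−A_0²B, 1, 1 + ξ/2) satisfies the lower bound C > (1/2)log₂(1 + B·A_0²) − 1/(ξ·ln 2), for all ξ > 0, A_0 > 0 and 0 < B·A_0² < 1. -/
open MeasureTheory Real

/-- Integral representation of the Lerch transcendent `Φ(−c, 1, v)` for `0 < c < 1`, `v > 0`. -/
noncomputable def lerchPhiInt (c v : ℝ) : ℝ :=
  ∫ y in Set.Ioi (0 : ℝ), Real.exp (-v * y) / (1 + c * Real.exp (-y))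

lemma integral_exp_neg_mul_Ioi_zero {v : ℝ} (hv : 0 < v) :
    (∫ y in Set.Ioi (0 : ℝ), Real.exp (-v * y)) = 1 / v := by
  have h := integral_comp_mul_left_Ioi (fun x => Real.exp (-x)) 0 hv
  simp only [mul_zero, integral_exp_neg_Ioi_zero, smul_eq_mul, mul_one] at h
  calc (∫ y in Set.Ioi (0 : ℝ), Real.exp (-v * y))
      = ∫ y in Set.Ioi (0 : ℝ), Real.exp (-(v * y)) := by
        simp [neg_mul]
    _ = v⁻¹ := h
    _ = 1 / v := (one_div v).symm

lemma lerchPhiInt_le {c v : ℝ} (hc : 0 ≤ c) (hv : 0 < v) :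
    lerchPhiInt c v ≤ 1 / v := by
  rw [← integral_exp_neg_mul_Ioi_zero hv]
  apply integral_mono_of_nonneg
  · filter_upwards with y
    have h1 : (0:ℝ) < 1 + c * Real.exp (-y) := by positivity
    positivity
  · exact exp_neg_integrableOn_Ioi 0 hv
  · filter_upwards with y
    have h1 : (1:ℝ) ≤ 1 + c * Real.exp (-y) := by
      nlinarith [Real.exp_pos (-y)]
    calc Real.exp (-v * y) / (1 + c * Real.exp (-y))
        ≤ Real.exp (-v * y) / 1 := by
          apply div_le_div_of_nonneg_left (Real.exp_pos _).le (by linarith) h1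
      _ = Real.exp (-v * y) := div_one _

/-- The ergodic spectral efficiency
`C = (1/2)log₂(1+B A₀²) − (A₀²B/(2 ln 2)) Φ(−A₀²B, 1, 1+ξ/2)` satisfies
`C > (1/2)log₂(1+B A₀²) − 1/(ξ ln 2)` for `ξ > 0`, `A₀ > 0`, `0 < B A₀² < 1`. -/
theorem stmt_10 (ξ A₀ B : ℝ) (hξ : 0 < ξ) (hA₀ : 0 < A₀)
    (hBA₀ : 0 < B * A₀ ^ 2) (hBA₁ : B * A₀ ^ 2 < 1) :
    (1 / 2) * Real.logb 2 (1 + B * A₀ ^ 2)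
        - (A₀ ^ 2 * B / (2 * Real.log 2)) * lerchPhiInt (A₀ ^ 2 * B) (1 + ξ / 2)
      > (1 / 2) * Real.logb 2 (1 + B * A₀ ^ 2) - 1 / (ξ * Real.log 2) := by
  have hc : 0 < A₀ ^ 2 * B := by linarith [hBA₀]; 
  have hv : 0 < 1 + ξ / 2 := by linarith
  have hΦ := lerchPhiInt_le (c := A₀ ^ 2 * B) hc.le hv
  have hlog2 : 0 < Real.log 2 := Real.log_pos (by norm_num)
  have hc1 : A₀ ^ 2 * B < 1 := by linarith [hBA₁]
  have key : (A₀ ^ 2 * B / (2 * Real.log 2)) * lerchPhiInt (A₀ ^ 2 * B) (1 + ξ / 2)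
      < 1 / (ξ * Real.log 2) := by
    have h1 : (A₀ ^ 2 * B / (2 * Real.log 2)) * lerchPhiInt (A₀ ^ 2 * B) (1 + ξ / 2)
        ≤ (A₀ ^ 2 * B / (2 * Real.log 2)) * (1 / (1 + ξ / 2)) := by
      apply mul_le_mul_of_nonneg_left hΦ (by positivity)
    have h2 : (A₀ ^ 2 * B / (2 * Real.log 2)) * (1 / (1 + ξ / 2))
        < 1 / (ξ * Real.log 2) := by
      rw [div_mul_div_comm, div_lt_div_iff₀ (by positivity) (by positivity)]
      nlinarith [mul_pos hξ hlog2, mul_pos hc hlog2]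
    linarith
  linarith
end
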